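/- For any cycle graph C_n with n ≥ 3, every monitoring edge-geodetic set of C_n has size at least 3. -/
import Mathlib


open SimpleGraph

/-- Two vertices `x` and `y` monitor an edge `e` in `G`: there is a shortest path between
them, and `e` lies on every shortest path between `x` and `y`. -/
def Monitors {V : Type*} (G : SimpleGraph V) (x y : V) (e : Sym2 V) : Prop :=
  (∃ p : G.Walk x y, p.IsPath ∧ p.length = G.dist x y) ∧
    ∀ p : G.Walk x y, p.IsPath → p.length = G.dist x y → e ∈ p.edges

/-- `S` is a monitoring edge-geodetic set of `G`. -/
def IsMEGSet {V : Type*} (G : SimpleGraph V) (S : Set V) : Prop :=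
  ∀ e ∈ G.edgeSet, ∃ x ∈ S, ∃ y ∈ S, Monitors G x y e

/-- The minimum size of a monitoring edge-geodetic set of `G`. -/
noncomputable def megNum {V : Type*} (G : SimpleGraph V) : ℕ :=
  sInf {n | ∃ S : Set V, IsMEGSet G S ∧ S.ncard = n}

/-- The set of leaves (degree-1 vertices) of `G`. -/
def leaves {V : Type*} (G : SimpleGraph V) : Set V :=
  {v | (G.neighborSet v).ncard = 1}

lemma monitors_self_false {V : Type*} {G : SimpleGraph V} {x : V} {e : Sym2 V}
    (h : Monitors G x x e) : False := by
  have := h.2 SimpleGraph.Walk.nil SimpleGraph.Walk.IsPath.nil (by simp [SimpleGraph.dist_self])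
  simp at this

lemma cycle_edgeCard (m : ℕ) : (cycleGraph (m + 3)).edgeFinset.card = m + 3 := by
  have h := SimpleGraph.sum_degrees_eq_twice_card_edges (cycleGraph (m + 3))
  simp only [cycleGraph_degree_three_le, Finset.sum_const, Finset.card_univ,
    Fintype.card_fin, smul_eq_mul] at h
  omega

theorem cycleGraph_MEG_lower (n : ℕ) (hn : 3 ≤ n) (S : Set (Fin n))
    (hS : IsMEGSet (cycleGraph n) S) : 3 ≤ S.ncard := by
  obtain ⟨m, rfl⟩ : ∃ m, n = m + 3 := ⟨n - 3, by omega⟩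
  by_contra hlt
  push_neg at hlt
  -- a first edge
  have hadj : (cycleGraph (m + 3)).Adj 1 0 := by
    rw [show m + 3 = (m + 1) + 2 by ring] at *
    rw [cycleGraph_adj]
    left; simp
  obtain ⟨a, ha, b, hb, hmon⟩ := hS s(1, 0) hadj
  have hab : a ≠ b := fun h => monitors_self_false (h ▸ hmon)
  -- everything in S is a or b
  have hmem : ∀ x ∈ S, x = a ∨ x = b := by
    intro x hx
    by_contra hc
    push_neg at hc
    have : 2 < S.ncard := by
      rw [Set.two_lt_ncard_iff S.toFinite]
      exact ⟨x, a, b, hx, ha, hb, hc.1, hc.2, hab⟩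
    omega
  obtain ⟨⟨p, hp, hlen⟩, -⟩ := hmon
  -- every edge lies on p
  have key : ∀ e ∈ (cycleGraph (m + 3)).edgeSet, e ∈ p.edges := by
    intro e he
    obtain ⟨x, hx, y, hy, mon⟩ := hS e he
    have hxy : x ≠ y := fun h => monitors_self_false (h ▸ mon)
    rcases hmem x hx with rfl | rfl
    · rcases hmem y hy with rfl | rfl
      · exact absurd rfl hxy
      · exact mon.2 p hp hlen
    · rcases hmem y hy with rfl | rfl
      · have := mon.2 p.reverse hp.reverse
          (by rw [SimpleGraph.Walk.length_reverse, hlen, SimpleGraph.dist_comm])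
        rw [SimpleGraph.Walk.edges_reverse, List.mem_reverse] at this
        exact this
      · exact absurd rfl hxy
  have hsub : (cycleGraph (m + 3)).edgeFinset ⊆ p.edges.toFinset := fun e he =>
    List.mem_toFinset.2 (key e (SimpleGraph.mem_edgeFinset.1 he))
  have h1 : m + 3 ≤ p.edges.toFinset.card := by
    have := Finset.card_le_card hsub
    rwa [cycle_edgeCard m] at this
  have h2 : p.edges.toFinset.card ≤ p.length := by
    have := List.toFinset_card_le p.edges
    rwa [SimpleGraph.Walk.length_edges] at this
  have h3 : p.length < Fintype.card (Fin (m + 3)) := hp.length_lt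
  rw [Fintype.card_fin] at h3
  omega
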